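/- Consider the simplified coevolutionary model (A = W, α = 0, γ = 0) with homogeneous λ, β ∈ (0,1) and W nonnegative row-stochastic. Suppose the state z(t) = (x(t), y(t)) is polarized with respect to a partition (V_p, V_n), and suppose Σ_{j∈V_p} w_{ij} > max( (1-2λ)/(1-λ), (1/2)(1 + β(1-λ)/(1-βλ)) ) for every i ∈ V_p and Σ_{j∈V_n} w_{ij} > max( (1-2λ)/(1-λ), (1/2)(1 + β(1-λ)/(1-βλ)) ) for every i ∈ V_n. Then if the agent i active at time t belongs to V_p, its updated opinion satisfies y_i(t+1) > 0, and if it belongs to V_n, its updated opinion satisfies y_i(t+1) < 0; consequently z(t+1) is again polarized with respect to (V_p, V_n). -/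
import Mathlib


open Finset Matrix Filter

/-- The quantity `δ_i(z)` in the simplified model (`A = W`, `α = 0`, `γ = 0`). -/
noncomputable def sDelta {n : ℕ} (w : Fin n → Fin n → ℝ) (lam β : ℝ)
    (x y : Fin n → ℝ) (i : Fin n) : ℝ :=
  2 * lam * β * (1 - lam) * (∑ j, w i j * y j) + (1 - β) * lam * (∑ j, w i j * x j)

/-- `S(d; x_i)`: `+1` if `d > 0`, `-1` if `d < 0`, and `x_i` if `d = 0`. -/
noncomputable def brS (d xi : ℝ) : ℝ := if 0 < d then 1 else if d < 0 then -1 else xi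

/-- A state `(x, y)` is an equilibrium of the simplified coevolutionary model if applying
the update rule to any agent leaves the state unchanged. -/
noncomputable def isEquilibrium {n : ℕ} (w : Fin n → Fin n → ℝ) (lam β : ℝ)
    (x y : Fin n → ℝ) : Prop :=
  ∀ i, brS (sDelta w lam β x y i) (x i) = x i ∧
    (1 - lam) * (∑ j, w i j * y j) + lam * brS (sDelta w lam β x y i) (x i) = y i

/-- A state `(x, y)` is polarized with respect to the partition `(Vp, Vn)`. -/
def Polarized {n : ℕ} (Vp Vn : Finset (Fin n)) (x y : Fin n → ℝ) : Prop :=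
  (∀ i ∈ Vp, x i = 1 ∧ 0 < y i) ∧ (∀ i ∈ Vn, x i = -1 ∧ y i < 0)

/-- A nonnegative matrix (given as a function) is irreducible if for every pair of indices
some power of the matrix has a positive entry there. -/
def FunIrreducible {n : ℕ} (W : Fin n → Fin n → ℝ) : Prop :=
  ∀ i j, ∃ k : ℕ, 0 < ((Matrix.of W) ^ k) i j

theorem stmt16 {n : ℕ} (hn : 2 ≤ n) (w : Fin n → Fin n → ℝ) (lam β : ℝ)
    (hw : ∀ i j, 0 ≤ w i j) (hwrow : ∀ i, ∑ j, w i j = 1)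
    (hlam : lam ∈ Set.Ioo (0 : ℝ) 1) (hβ : β ∈ Set.Ioo (0 : ℝ) 1)
    -- a partition of the agents into two nonempty disjoint sets
    (Vp Vn : Finset (Fin n)) (hdisj : Disjoint Vp Vn) (hunion : Vp ∪ Vn = Finset.univ)
    (hVp : Vp.Nonempty) (hVn : Vn.Nonempty)
    -- the current state `z(t) = (x, y)`, polarized with respect to `(Vp, Vn)`
    (x y : Fin n → ℝ) (hy : ∀ i, y i ∈ Set.Icc (-1 : ℝ) 1)
    (hpol : Polarized Vp Vn x y)
    -- the in-group weight condition
    (hcp : ∀ i ∈ Vp, (∑ j ∈ Vp, w i j) >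
      max ((1 - 2 * lam) / (1 - lam)) (1 / 2 * (1 + β * (1 - lam) / (1 - β * lam))))
    (hcn : ∀ i ∈ Vn, (∑ j ∈ Vn, w i j) >
      max ((1 - 2 * lam) / (1 - lam)) (1 / 2 * (1 + β * (1 - lam) / (1 - β * lam))))
    -- the agent active at time t
    (i : Fin n) :
    (i ∈ Vp → 0 < (1 - lam) * (∑ j, w i j * y j) +
        lam * brS (sDelta w lam β x y i) (x i)) ∧
    (i ∈ Vn → (1 - lam) * (∑ j, w i j * y j) +
        lam * brS (sDelta w lam β x y i) (x i) < 0) ∧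
    Polarized Vp Vn
      (Function.update x i (brS (sDelta w lam β x y i) (x i)))
      (Function.update y i ((1 - lam) * (∑ j, w i j * y j) +
        lam * brS (sDelta w lam β x y i) (x i))) := by

  obtain ⟨hl0, hl1⟩ := hlam
  obtain ⟨hb0, hb1⟩ := hβ
  obtain ⟨hxp, hxn⟩ := hpol
  have hbl : β * lam < 1 := by nlinarith
  have hsplit : ∀ f : Fin n → ℝ, ∑ j, f j = ∑ j ∈ Vp, f j + ∑ j ∈ Vn, f j := fun f => by
    rw [← Finset.sum_union hdisj, hunion]
  have key_p : i ∈ Vp → 0 < sDelta w lam β x y i ∧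
      0 < (1 - lam) * (∑ j, w i j * y j) + lam := by
    intro hi
    have hBn : ∑ j ∈ Vn, w i j = 1 - ∑ j ∈ Vp, w i j := by
      have h := hwrow i; rw [hsplit (w i)] at h; linarith
    set A := ∑ j ∈ Vp, w i j with hA
    have hAc := hcp i hi
    have hA1 : 1 / 2 * (1 + β * (1 - lam) / (1 - β * lam)) < A :=
      lt_of_le_of_lt (le_max_right _ _) hAc
    have hA2 : (1 - 2 * lam) / (1 - lam) < A := lt_of_le_of_lt (le_max_left _ _) hAc
    have hbl' : (0:ℝ) < 1 - β * lam := by linarith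
    have hfrac : β * (1 - lam) < (2 * A - 1) * (1 - β * lam) := by
      have h1 : β * (1 - lam) / (1 - β * lam) < 2 * A - 1 := by linarith
      calc β * (1 - lam) = β * (1 - lam) / (1 - β * lam) * (1 - β * lam) := by
            field_simp
        _ < (2 * A - 1) * (1 - β * lam) := mul_lt_mul_of_pos_right h1 hbl'
    have hA2' : 1 - 2 * lam < A * (1 - lam) := by
      rw [div_lt_iff₀ (by linarith)] at hA2; linarith
    have hSx : ∑ j, w i j * x j = 2 * A - 1 := by
      rw [hsplit]
      have h1 : ∑ j ∈ Vp, w i j * x j = A :=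
        Finset.sum_congr rfl fun j hj => by rw [(hxp j hj).1, mul_one]
      have h2 : ∑ j ∈ Vn, w i j * x j = -(1 - A) := by
        rw [← hBn, ← Finset.sum_neg_distrib]
        exact Finset.sum_congr rfl fun j hj => by rw [(hxn j hj).1]; ring
      rw [h1, h2]; ring
    have hSy : A - 1 ≤ ∑ j, w i j * y j := by
      rw [hsplit]
      have h1 : (0:ℝ) ≤ ∑ j ∈ Vp, w i j * y j :=
        Finset.sum_nonneg fun j hj => mul_nonneg (hw i j) (hxp j hj).2.le
      have h2 : ∑ j ∈ Vn, -(w i j) ≤ ∑ j ∈ Vn, w i j * y j :=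
        Finset.sum_le_sum fun j hj => by nlinarith [(hy j).1, hw i j]
      rw [Finset.sum_neg_distrib, hBn] at h2
      linarith
    constructor
    · rw [sDelta, hSx]
      have hc : (0:ℝ) ≤ 2 * lam * β * (1 - lam) :=
        le_of_lt (mul_pos (mul_pos (by linarith : (0:ℝ) < 2 * lam) hb0)
          (by linarith : (0:ℝ) < 1 - lam))
      have h1 := mul_le_mul_of_nonneg_left hSy hc
      have h2 := mul_pos hl0 (show (0:ℝ) < (2 * A - 1) * (1 - β * lam) - β * (1 - lam) by linarith)
      have hid : 2 * lam * β * (1 - lam) * (A - 1) + (1 - β) * lam * (2 * A - 1)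
          = lam * ((2 * A - 1) * (1 - β * lam) - β * (1 - lam)) := by ring
      linarith
    · have h1 := mul_le_mul_of_nonneg_left hSy (show (0:ℝ) ≤ 1 - lam by linarith)
      have hid : (1 - lam) * (A - 1) = A * (1 - lam) - (1 - lam) := by ring
      linarith
  have key_n : i ∈ Vn → sDelta w lam β x y i < 0 ∧
      (1 - lam) * (∑ j, w i j * y j) - lam < 0 := by
    intro hi
    have hBn : ∑ j ∈ Vp, w i j = 1 - ∑ j ∈ Vn, w i j := by
      have h := hwrow i; rw [hsplit (w i)] at h; linarith
    set B := ∑ j ∈ Vn, w i j with hB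
    have hBc := hcn i hi
    have hB1 : 1 / 2 * (1 + β * (1 - lam) / (1 - β * lam)) < B :=
      lt_of_le_of_lt (le_max_right _ _) hBc
    have hB2 : (1 - 2 * lam) / (1 - lam) < B := lt_of_le_of_lt (le_max_left _ _) hBc
    have hbl' : (0:ℝ) < 1 - β * lam := by linarith
    have hfrac : β * (1 - lam) < (2 * B - 1) * (1 - β * lam) := by
      have h1 : β * (1 - lam) / (1 - β * lam) < 2 * B - 1 := by linarith
      calc β * (1 - lam) = β * (1 - lam) / (1 - β * lam) * (1 - β * lam) := by
            field_simp
        _ < (2 * B - 1) * (1 - β * lam) := mul_lt_mul_of_pos_right h1 hbl'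
    have hB2' : 1 - 2 * lam < B * (1 - lam) := by
      rw [div_lt_iff₀ (by linarith)] at hB2; linarith
    have hSx : ∑ j, w i j * x j = 1 - 2 * B := by
      rw [hsplit]
      have h1 : ∑ j ∈ Vp, w i j * x j = 1 - B := by
        rw [← hBn]
        exact Finset.sum_congr rfl fun j hj => by rw [(hxp j hj).1, mul_one]
      have h2 : ∑ j ∈ Vn, w i j * x j = -B := by
        rw [hB, ← Finset.sum_neg_distrib]
        exact Finset.sum_congr rfl fun j hj => by rw [(hxn j hj).1]; ring
      rw [h1, h2]; ring
    have hSy : ∑ j, w i j * y j ≤ 1 - B := by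
      rw [hsplit]
      have h1 : ∑ j ∈ Vn, w i j * y j ≤ 0 :=
        Finset.sum_nonpos fun j hj => mul_nonpos_of_nonneg_of_nonpos (hw i j) (hxn j hj).2.le
      have h2 : ∑ j ∈ Vp, w i j * y j ≤ ∑ j ∈ Vp, w i j :=
        Finset.sum_le_sum fun j hj => by nlinarith [(hy j).2, hw i j]
      rw [hBn] at h2
      linarith
    constructor
    · rw [sDelta, hSx]
      have hc : (0:ℝ) ≤ 2 * lam * β * (1 - lam) :=
        le_of_lt (mul_pos (mul_pos (by linarith : (0:ℝ) < 2 * lam) hb0)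
          (by linarith : (0:ℝ) < 1 - lam))
      have h1 := mul_le_mul_of_nonneg_left hSy hc
      have h2 := mul_pos hl0 (show (0:ℝ) < (2 * B - 1) * (1 - β * lam) - β * (1 - lam) by linarith)
      have hid : 2 * lam * β * (1 - lam) * (1 - B) + (1 - β) * lam * (1 - 2 * B)
          = -(lam * ((2 * B - 1) * (1 - β * lam) - β * (1 - lam))) := by ring
      linarith
    · have h1 := mul_le_mul_of_nonneg_left hSy (show (0:ℝ) ≤ 1 - lam by linarith)
      have hid : (1 - lam) * (1 - B) = (1 - lam) - B * (1 - lam) := by ring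
      linarith
  have hbr_p : i ∈ Vp → brS (sDelta w lam β x y i) (x i) = 1 := fun hi => by
    rw [brS, if_pos (key_p hi).1]
  have hbr_n : i ∈ Vn → brS (sDelta w lam β x y i) (x i) = -1 := fun hi => by
    rw [brS, if_neg (by linarith [(key_n hi).1]), if_pos (key_n hi).1]
  refine ⟨fun hi => ?_, fun hi => ?_, ?_, ?_⟩
  · rw [hbr_p hi, mul_one]; exact (key_p hi).2
  · rw [hbr_n hi, mul_neg_one]
    have := (key_n hi).2; linarith
  · intro j hj
    by_cases h : j = i
    · subst h
      rw [Function.update_self, Function.update_self, hbr_p hj, mul_one]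
      exact ⟨rfl, (key_p hj).2⟩
    · rw [Function.update_of_ne h, Function.update_of_ne h]
      exact hxp j hj
  · intro j hj
    by_cases h : j = i
    · subst h
      rw [Function.update_self, Function.update_self, hbr_n hj, mul_neg_one]
      have := (key_n hj).2
      exact ⟨rfl, by linarith⟩
    · rw [Function.update_of_ne h, Function.update_of_ne h]
      exact hxn j hj
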